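/- arXiv:1109.3701 — 3 statements merged into one kernel-verified Lean document; each statement's English description precedes it below -/
import Mathlib

section
/- For every configuration of points θ_1,…,θ_n ∈ ℝ^d (no genericity assumption needed), the number of realizable rankings satisfies |Σ_{n,d}| ≤ Σ_{i=0}^{d} C(n(n−1)/2, i), where C denotes the binomial coefficient. (Each realizable ranking corresponds to a distinct nonempty open cell of the arrangement of the at most n(n−1)/2 bisecting hyperplanes, and an arrangement of K hyperplanes in ℝ^d has at most Σ_{i=0}^{d} C(K,i) cells.) -/
/-!
A realizable ranking is determined by the side of each bisecting hyperplane on which a reference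
point realizing it lies, so it suffices to count the strict sign patterns of `K` affine
functionals on a space of dimension at most `d`. Removing the last functional `F`, every pattern
of the others extends in at most two ways; if it extends both ways, the segment between two
witnesses crosses `{F = 0}` at a witness of the shorter pattern on that hyperplane, a space of
dimension at most `d - 1`. So the maximal number `P(K, d)` of patterns satisfies
`P(K + 1, d) ≤ P(K, d) + P(K, d - 1)`, Pascal's recursion for `∑_{i ≤ d} C(K, i)`.
-/

/-- A ranking (linear order of `{1,…,n}`, encoded as a permutation `σ` sending rank
positions to objects, so that `i` precedes `j` iff `σ⁻¹ i < σ⁻¹ j`) is realizable for the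
configuration `θ` if some reference point `r` orders the objects by distance accordingly. -/
def realizableRankings {n d : ℕ} (θ : Fin n → EuclideanSpace ℝ (Fin d)) :
    Set (Equiv.Perm (Fin n)) :=
  {σ | ∃ r : EuclideanSpace ℝ (Fin d),
    ∀ i j : Fin n, σ.symm i < σ.symm j ↔ dist (θ i) r < dist (θ j) r}

open Finset Module

theorem sum_range_choose_succ (K m : ℕ) :
    ∑ i ∈ range (m + 1), (K + 1).choose i =
      ∑ i ∈ range (m + 1), K.choose i + ∑ i ∈ range m, K.choose i := by
  rw [sum_range_succ' _ m, sum_range_succ' (fun i => K.choose i) m]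
  simp only [Nat.choose_succ_succ', sum_add_distrib, Nat.choose_zero_right]
  ring

theorem ncard_le_ncard_exists_snoc_add_ncard_forall_snoc {K : ℕ}
    (S : Set (Fin (K + 1) → Bool)) :
    S.ncard ≤ {t : Fin K → Bool | ∃ b, Fin.snoc t b ∈ S}.ncard +
      {t : Fin K → Bool | ∀ b, Fin.snoc t b ∈ S}.ncard := by
  let snoc (b : Bool) (t : Fin K → Bool) : Fin (K + 1) → Bool := Fin.snoc t b
  set A := {t | snoc true t ∈ S}
  set B := {t | snoc false t ∈ S}
  have hS : S ⊆ snoc true '' A ∪ snoc false '' B := by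
    intro s hs
    obtain ⟨t, b, rfl⟩ : ∃ t b, s = snoc b t :=
      ⟨Fin.init s, s (Fin.last K), (Fin.snoc_init_self s).symm⟩
    cases b
    exacts [Or.inr ⟨t, hs, rfl⟩, Or.inl ⟨t, hs, rfl⟩]
  have hunion : {t : Fin K → Bool | ∃ b, Fin.snoc t b ∈ S} = A ∪ B := by
    ext t
    simp only [Bool.exists_bool, Set.mem_ofPred_eq, Set.mem_union, A, B, snoc, or_comm]
  have hinter : {t : Fin K → Bool | ∀ b, Fin.snoc t b ∈ S} = A ∩ B := by
    ext t
    simp only [Bool.forall_bool, Set.mem_ofPred_eq, Set.mem_inter_iff, A, B, snoc, and_comm]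
  calc S.ncard ≤ (snoc true '' A ∪ snoc false '' B).ncard := Set.ncard_le_ncard hS
    _ ≤ (snoc true '' A).ncard + (snoc false '' B).ncard := Set.ncard_union_le _ _
    _ ≤ A.ncard + B.ncard :=
        add_le_add (Set.ncard_image_le A.toFinite) (Set.ncard_image_le B.toFinite)
    _ = _ := by rw [hunion, hinter, Set.ncard_union_add_ncard_inter _ _ A.toFinite B.toFinite]

theorem Real.exists_lineMap_eq_zero {a b : ℝ} (ha : 0 < a) (hb : b < 0) :
    ∃ t ∈ Set.Icc (0 : ℝ) 1, AffineMap.lineMap a b t = 0 := by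
  have hab : 0 < a - b := by linarith
  refine ⟨a / (a - b), ⟨by positivity, (div_le_one hab).2 (by linarith)⟩, ?_⟩
  rw [AffineMap.lineMap_apply_ring']
  field_simp
  ring

def signRegion : Bool → Set ℝ
  | true => Set.Ioi 0
  | false => Set.Iio 0

theorem convex_signRegion (b : Bool) : Convex ℝ (signRegion b) := by
  cases b
  exacts [convex_Iio 0, convex_Ioi 0]

section AffineFunctionals

variable {ι V : Type*} [AddCommGroup V] [Module ℝ V]

/-- The open cells of the arrangement of hyperplanes `{f k = 0}`, each labelled by the side
(`true` for positive) of every hyperplane on which it lies. -/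
def signPatterns (f : ι → V →ᵃ[ℝ] ℝ) : Set (ι → Bool) :=
  {s | ∃ x, ∀ k, f k x ∈ signRegion (s k)}

theorem ncard_signPatterns_comp_equiv {κ : Type*} (f : ι → V →ᵃ[ℝ] ℝ) (e : κ ≃ ι) :
    (signPatterns (f ∘ e)).ncard = (signPatterns f).ncard := by
  have himage : signPatterns (f ∘ e) = (· ∘ e) '' signPatterns f := by
    ext s
    constructor
    · rintro ⟨x, hx⟩
      exact ⟨s ∘ e.symm, ⟨x, fun k => by simpa using hx (e.symm k)⟩, by ext; simp⟩
    · rintro ⟨s, ⟨x, hx⟩, rfl⟩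
      exact ⟨x, fun k => hx (e k)⟩
  rw [himage, Set.ncard_image_of_injective _ e.surjective.injective_comp_right]

def levelSetParam (F : V →ᵃ[ℝ] ℝ) (p : V) : LinearMap.ker F.linear →ᵃ[ℝ] V :=
  (LinearMap.ker F.linear).subtype.toAffineMap + AffineMap.const ℝ _ p

theorem exists_levelSetParam_eq {F : V →ᵃ[ℝ] ℝ} {p z : V} (h : F z = F p) :
    ∃ u, levelSetParam F p u = z :=
  ⟨⟨z - p, by simp [LinearMap.mem_ker, ← vsub_eq_sub, F.linearMap_vsub, h]⟩, by
    simp [levelSetParam]⟩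

theorem AffineMap.finrank_ker_linear_add_one [FiniteDimensional ℝ V] {F : V →ᵃ[ℝ] ℝ}
    {x y : V} (h : F x ≠ F y) : finrank ℝ (LinearMap.ker F.linear) + 1 = finrank ℝ V := by
  refine Module.Dual.finrank_ker_add_one_of_ne_zero fun h0 => h ?_
  have := F.linearMap_vsub x y
  rwa [h0, LinearMap.zero_apply, vsub_eq_sub, eq_comm, sub_eq_zero] at this

theorem forall_snoc_mem_signPatterns_subset {K : ℕ} {f : Fin (K + 1) → V →ᵃ[ℝ] ℝ} {p : V}
    (hp : f (Fin.last K) p = 0) :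
    {t | ∀ b, Fin.snoc t b ∈ signPatterns f} ⊆
      signPatterns fun k => (f k.castSucc).comp (levelSetParam (f (Fin.last K)) p) := by
  intro t ht
  obtain ⟨x, hx⟩ := ht true
  obtain ⟨y, hy⟩ := ht false
  have hxF : 0 < f (Fin.last K) x := by simpa [signRegion] using hx (Fin.last K)
  have hyF : f (Fin.last K) y < 0 := by simpa [signRegion] using hy (Fin.last K)
  obtain ⟨c, hc, hzero⟩ := Real.exists_lineMap_eq_zero hxF hyF
  rw [← AffineMap.apply_lineMap] at hzero
  obtain ⟨u, hu⟩ := exists_levelSetParam_eq (hzero.trans hp.symm)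
  refine ⟨u, fun k => ?_⟩
  rw [AffineMap.comp_apply, hu, AffineMap.apply_lineMap]
  exact (convex_signRegion _).lineMap_mem (by simpa using hx k.castSucc)
    (by simpa using hy k.castSucc) hc

theorem ncard_signPatterns_fin_le [FiniteDimensional ℝ V] {K d : ℕ} (hd : finrank ℝ V ≤ d)
    (f : Fin K → V →ᵃ[ℝ] ℝ) : (signPatterns f).ncard ≤ ∑ i ∈ range (d + 1), K.choose i := by
  induction K generalizing V d with
  | zero => simpa [sum_range_succ'] using Set.ncard_le_one_of_subsingleton (signPatterns f)
  | succ K ih =>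
    have hsome : {t | ∃ b, Fin.snoc t b ∈ signPatterns f}.ncard ≤
        ∑ i ∈ range (d + 1), K.choose i := by
      refine (Set.ncard_le_ncard ?_).trans (ih hd fun k => f k.castSucc)
      rintro t ⟨b, x, hx⟩
      exact ⟨x, fun k => by simpa using hx k.castSucc⟩
    have hboth : {t | ∀ b, Fin.snoc t b ∈ signPatterns f}.ncard ≤
        ∑ i ∈ range d, K.choose i := by
      rcases Set.eq_empty_or_nonempty {t | ∀ b, Fin.snoc t b ∈ signPatterns f} with h | ⟨t, ht⟩
      · rw [h, Set.ncard_empty]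
        exact Nat.zero_le _
      obtain ⟨x, hx⟩ := ht true
      obtain ⟨y, hy⟩ := ht false
      have hxF : 0 < f (Fin.last K) x := by simpa [signRegion] using hx (Fin.last K)
      have hyF : f (Fin.last K) y < 0 := by simpa [signRegion] using hy (Fin.last K)
      obtain ⟨c, -, hzero⟩ := Real.exists_lineMap_eq_zero hxF hyF
      rw [← AffineMap.apply_lineMap] at hzero
      have hrank := AffineMap.finrank_ker_linear_add_one (hyF.trans hxF).ne'
      obtain ⟨e, rfl⟩ : ∃ e, d = e + 1 := ⟨d - 1, by omega⟩
      exact (Set.ncard_le_ncard (forall_snoc_mem_signPatterns_subset hzero)).trans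
        (ih (by omega) _)
    calc (signPatterns f).ncard
        ≤ {t | ∃ b, Fin.snoc t b ∈ signPatterns f}.ncard +
            {t | ∀ b, Fin.snoc t b ∈ signPatterns f}.ncard :=
          ncard_le_ncard_exists_snoc_add_ncard_forall_snoc _
      _ ≤ ∑ i ∈ range (d + 1), K.choose i + ∑ i ∈ range d, K.choose i := add_le_add hsome hboth
      _ = ∑ i ∈ range (d + 1), (K + 1).choose i := (sum_range_choose_succ K d).symm

theorem ncard_signPatterns_le [Fintype ι] [FiniteDimensional ℝ V] {d : ℕ}
    (hd : finrank ℝ V ≤ d) (f : ι → V →ᵃ[ℝ] ℝ) :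
    (signPatterns f).ncard ≤ ∑ i ∈ range (d + 1), (Fintype.card ι).choose i := by
  rw [← ncard_signPatterns_comp_equiv f (Fintype.equivFin ι).symm]
  exact ncard_signPatterns_fin_le hd _

end AffineFunctionals

section Bisector

variable {V : Type*} [NormedAddCommGroup V] [InnerProductSpace ℝ V]

noncomputable def bisector (a b : V) : V →ᵃ[ℝ] ℝ :=
  (innerₛₗ ℝ ((2 : ℝ) • (a - b))).toAffineMap + AffineMap.const ℝ V (‖b‖ ^ 2 - ‖a‖ ^ 2)

theorem bisector_apply (a b x : V) : bisector a b x = ‖x - b‖ ^ 2 - ‖x - a‖ ^ 2 := by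
  simp only [bisector, map_smul, map_sub, AffineMap.coe_add, LinearMap.coe_toAffineMap,
    LinearMap.coe_smul, AffineMap.coe_const, Pi.add_apply, Pi.smul_apply, LinearMap.sub_apply,
    innerₛₗ_apply_apply, real_inner_comm x, smul_eq_mul, Function.const_apply, norm_sub_sq_real]
  ring

theorem bisector_pos_iff {a b x : V} : 0 < bisector a b x ↔ dist a x < dist b x := by
  rw [bisector_apply, sub_pos, dist_eq_norm', dist_eq_norm',
    sq_lt_sq₀ (norm_nonneg _) (norm_nonneg _)]

theorem bisector_neg_iff {a b x : V} : bisector a b x < 0 ↔ dist b x < dist a x := by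
  rw [bisector_apply, sub_neg, dist_eq_norm', dist_eq_norm',
    sq_lt_sq₀ (norm_nonneg _) (norm_nonneg _)]

end Bisector

section PairOrder

variable {α : Type*} [LinearOrder α]

theorem Equiv.Perm.eq_of_forall_lt_iff [WellFoundedLT α] {σ τ : Equiv.Perm α}
    (h : ∀ i j, i < j → (σ i < σ j ↔ τ i < τ j)) : σ = τ := by
  have hlt : ∀ i j, σ i < σ j ↔ τ i < τ j := by
    intro i j
    rcases lt_trichotomy i j with hij | rfl | hij
    · exact h i j hij
    · simp
    · have := h j i hij
      have hσ := σ.injective.ne hij.ne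
      have hτ := τ.injective.ne hij.ne
      grind
  -- `τ ∘ σ⁻¹` is an order automorphism of a well-order, hence the identity.
  let π : α ≃o α :=
    { σ.symm.trans τ with
      map_rel_iff' := fun {a b} => by
        simpa [not_lt] using (hlt (σ.symm b) (σ.symm a)).not.symm }
  have hπ : π = OrderIso.refl α := Subsingleton.elim _ _
  ext i
  simpa [π] using (congrArg (fun e : α ≃o α => e (σ i)) hπ).symm

def pairOrder (σ : Equiv.Perm α) (p : {p : α × α // p.1 < p.2}) : Bool :=
  decide (σ.symm p.1.1 < σ.symm p.1.2)

theorem pairOrder_injective [WellFoundedLT α] : Function.Injective (pairOrder (α := α)) :=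
  fun σ τ h => Equiv.symm_bijective.injective <| Equiv.Perm.eq_of_forall_lt_iff
    fun i j hij => by simpa [pairOrder] using congrFun h ⟨(i, j), hij⟩

end PairOrder

theorem pairOrder_mem_signPatterns_bisector {n d : ℕ} {θ : Fin n → EuclideanSpace ℝ (Fin d)}
    {σ : Equiv.Perm (Fin n)} (hσ : σ ∈ realizableRankings θ) :
    pairOrder σ ∈ signPatterns fun p => bisector (θ p.1.1) (θ p.1.2) := by
  obtain ⟨r, hr⟩ := hσ
  refine ⟨r, fun p => ?_⟩
  by_cases h : σ.symm p.1.1 < σ.symm p.1.2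
  · simpa [pairOrder, h, signRegion, bisector_pos_iff] using (hr _ _).1 h
  · have h' : σ.symm p.1.2 < σ.symm p.1.1 :=
      (not_lt.1 h).lt_of_ne (σ.symm.injective.ne p.2.ne')
    simpa [pairOrder, h, signRegion, bisector_neg_iff] using (hr _ _).1 h'

/-- for every configuration of `n` points in `ℝ^d` (no genericity needed),
the number of realizable rankings is at most `∑_{i=0}^{d} C(n(n-1)/2, i)`. -/
theorem stmt_3 (n d : ℕ) (θ : Fin n → EuclideanSpace ℝ (Fin d)) :
    (realizableRankings θ).ncard ≤ ∑ i ∈ Finset.range (d + 1), (n * (n - 1) / 2).choose i := by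
  have hpairs : Fintype.card {p : Fin n × Fin n // p.1 < p.2} = n * (n - 1) / 2 := by
    rw [Fintype.card_subtype, Fintype.card_product_filter_lt, Fintype.card_fin,
      Nat.choose_two_right]
  rw [← hpairs]
  calc (realizableRankings θ).ncard
      ≤ (signPatterns fun p : {p : Fin n × Fin n // p.1 < p.2} =>
          bisector (θ p.1.1) (θ p.1.2)).ncard :=
        Set.ncard_le_ncard_of_injOn pairOrder (fun _ => pairOrder_mem_signPatterns_bisector)
          pairOrder_injective.injOn
    _ ≤ _ := ncard_signPatterns_le finrank_euclideanSpace_fin.le _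
end

section
/- Let n and R be positive integers and let π be a uniformly random permutation of {1,…,n}, representing the positions in a ranking of objects drawn sequentially without replacement. Let M be the largest integer m such that the first m draws are pairwise more than R positions apart, i.e., |π(i) − π(j)| > R for all 1 ≤ i < j ≤ m. Then P( M ≥ √( (n/R) / (6·log 2) ) ) ≥ (1/(6·log 2)) · ( exp( −(√(6·log(2)·R/n) + 1)²/2 ) − 2^{−n/(3R)} ). -/
open scoped Classical

/-- The first `m` draws (positions `π 0, …, π (m-1)` in the ranking) are pairwise more
than `R` positions apart. -/
def PairwiseFar {n : ℕ} (R : ℕ) (π : Equiv.Perm (Fin n)) (m : ℕ) : Prop :=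
  ∀ i j : Fin n, (i : ℕ) < m → (j : ℕ) < m → i ≠ j → (R : ℤ) < |(π i : ℤ) - (π j : ℤ)|

/-- `M`: the largest `m` such that the first `m` draws are pairwise more than `R`
positions apart. -/
noncomputable def sepLength {n : ℕ} (R : ℕ) (π : Equiv.Perm (Fin n)) : ℕ :=
  sSup {m | m ≤ n ∧ PairwiseFar R π m}

/-!
The left-hand side is at most `(2/3)/(6 log 2) = 1/(9 log 2)`, since `e^{-1/2} ≤ 2/3`, so it
suffices that `M ≥ s := √(n/(6 R log 2))` with probability at least `1/(9 log 2)`. For `s ≤ 1`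
this is certain. Otherwise, for `i ≠ j` the pair `(π i, π j)` is uniform over the `n(n-1)`
off-diagonal pairs, at most `2Rn` of which are within distance `R`; a union bound over the pairs
among the first `⌈s⌉` draws bounds the failure probability by `s(s+1)R/(n-1) ≤ 5/(12 log 2)`.
-/

open Finset Equiv

namespace Equiv.Perm

variable {α : Type*} [DecidableEq α]

lemma exists_apply_eq_and_apply_eq {a b c d : α} (hab : a ≠ b) (hcd : c ≠ d) :
    ∃ σ : Perm α, σ a = c ∧ σ b = d := by
  have hb : swap a c b ≠ c := by
    simpa using (swap a c).injective.ne hab.symm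
  refine ⟨swap (swap a c b) d * swap a c, ?_, by simp⟩
  simp only [mul_apply, swap_apply_left]
  exact swap_apply_of_ne_of_ne hb.symm hcd

variable [Fintype α]

/-- Left multiplication by a permutation sending `p` to `q` matches the two fibres. -/
lemma card_filter_apply_pair_eq (i j : α) {p q : α × α} (hp : p.1 ≠ p.2) (hq : q.1 ≠ q.2) :
    #{π : Perm α | (π i, π j) = p} = #{π : Perm α | (π i, π j) = q} := by
  obtain ⟨σ, hσ₁, hσ₂⟩ := exists_apply_eq_and_apply_eq hp hq
  refine card_bij' (fun π _ => σ * π) (fun π _ => σ⁻¹ * π) ?_ ?_ (by simp) (by simp)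
  · intro π hπ
    simp_all [Prod.ext_iff]
  · intro π hπ
    simp only [mem_filter, mem_univ, true_and, Prod.ext_iff, mul_apply] at hπ ⊢
    rw [hπ.1, hπ.2, ← hσ₁, ← hσ₂]
    simp

lemma card_filter_apply_pair_mem_mul {i j : α} (hij : i ≠ j) {T : Finset (α × α)}
    (hT : T ⊆ univ.offDiag) :
    #{π : Perm α | (π i, π j) ∈ T} * #(univ : Finset α).offDiag
      = #T * (Fintype.card α).factorial := by
  set F : α × α → ℕ := fun p => #{π : Perm α | (π i, π j) = p}
  have hF : ∀ p ∈ T, ∀ q ∈ (univ : Finset α).offDiag, F p = F q := fun p hp q hq =>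
    card_filter_apply_pair_eq i j (mem_offDiag.1 (hT hp)).2.2 (mem_offDiag.1 hq).2.2
  have htotal : ∑ q ∈ (univ : Finset α).offDiag, F q = (Fintype.card α).factorial := by
    rw [← Fintype.card_perm, ← card_univ, sum_card_fiberwise_eq_card_filter,
      filter_true_of_mem]
    intro π _
    simpa using π.injective.ne hij
  calc #{π : Perm α | (π i, π j) ∈ T} * #(univ : Finset α).offDiag
      = ∑ p ∈ T, ∑ _q ∈ (univ : Finset α).offDiag, F p := by
        rw [← sum_card_fiberwise_eq_card_filter, sum_mul]
        simp only [sum_const, smul_eq_mul, F, mul_comm]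
    _ = ∑ _p ∈ T, ∑ q ∈ (univ : Finset α).offDiag, F q :=
        sum_congr rfl fun p hp => sum_congr rfl (hF p hp)
    _ = #T * (Fintype.card α).factorial := by rw [htotal, sum_const, smul_eq_mul]

end Equiv.Perm

lemma card_offDiag_filter_abs_sub_le (n R : ℕ) :
    #{p ∈ (univ : Finset (Fin n)).offDiag | |(p.1 : ℤ) - p.2| ≤ R} ≤ 2 * R * n := by
  calc #{p ∈ (univ : Finset (Fin n)).offDiag | |(p.1 : ℤ) - p.2| ≤ R}
      ≤ #((univ : Finset (Fin n)) ×ˢ (Icc (-R : ℤ) R).erase 0) := by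
        refine card_le_card_of_injOn (fun p => (p.1, (p.2 : ℤ) - p.1)) ?_ ?_
        · intro p hp
          simp only [coe_filter, mem_offDiag, mem_univ, true_and, Set.mem_ofPred_eq] at hp
          have hne : (p.2 : ℤ) ≠ p.1 := fun h => hp.1 (Fin.ext (by omega))
          simp only [coe_product, coe_univ, coe_erase, coe_Icc, Set.mem_prod, Set.mem_univ,
            true_and, Set.mem_sdiff, Set.mem_Icc, Set.mem_singleton_iff]
          have := abs_le.1 hp.2
          omega
        · intro p _ q _ h
          simp only [Prod.mk.injEq] at h
          exact Prod.ext h.1 (Fin.ext (by omega))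
    _ = 2 * R * n := by
        rw [card_product, card_erase_of_mem (by simp), Int.card_Icc, card_univ, Fintype.card_fin]
        have : (R + 1 - -R : ℤ).toNat - 1 = 2 * R := by omega
        rw [this]; ring

lemma card_filter_abs_sub_apply_le {n : ℕ} (R : ℕ) {i j : Fin n} (hij : i ≠ j) :
    #{π : Perm (Fin n) | |(π i : ℤ) - π j| ≤ R} * (n - 1) ≤ 2 * R * n.factorial := by
  have hn : 0 < n := i.pos
  have hcard := Perm.card_filter_apply_pair_mem_mul hij
    (filter_subset (fun p : Fin n × Fin n => |(p.1 : ℤ) - p.2| ≤ R) univ.offDiag)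
  have hfilter : (univ.filter fun π : Perm (Fin n) => |(π i : ℤ) - π j| ≤ R)
      = univ.filter fun π : Perm (Fin n) =>
          (π i, π j) ∈ {p ∈ (univ : Finset (Fin n)).offDiag | |(p.1 : ℤ) - p.2| ≤ R} := by
    refine filter_congr fun π _ => ?_
    simp [π.injective.ne hij]
  rw [offDiag_card, card_univ, Fintype.card_fin, ← hfilter, ← Nat.mul_sub_one] at hcard
  refine Nat.le_of_mul_le_mul_left ?_ hn
  calc n * (#{π : Perm (Fin n) | |(π i : ℤ) - π j| ≤ R} * (n - 1))
      = #{p ∈ (univ : Finset (Fin n)).offDiag | |(p.1 : ℤ) - p.2| ≤ R} * n.factorial := by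
        rw [← hcard]; ring
    _ ≤ 2 * R * n * n.factorial := Nat.mul_le_mul_right _ (card_offDiag_filter_abs_sub_le n R)
    _ = n * (2 * R * n.factorial) := by ring

lemma not_pairwiseFar_iff {n : ℕ} {R : ℕ} {π : Perm (Fin n)} {u : ℕ} :
    ¬PairwiseFar R π u ↔ ∃ j : Fin n, (j : ℕ) < u ∧ ∃ i < j, |(π i : ℤ) - π j| ≤ R := by
  simp only [PairwiseFar, not_forall, not_lt, exists_prop]
  constructor
  · rintro ⟨i, j, hi, hj, hij, hclose⟩
    rcases hij.lt_or_gt with h | h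
    · exact ⟨j, hj, i, h, hclose⟩
    · exact ⟨i, hi, j, h, by rwa [abs_sub_comm]⟩
  · rintro ⟨j, hj, i, hij, hclose⟩
    exact ⟨i, j, (Fin.lt_def.1 hij).trans hj, hj, hij.ne, hclose⟩

lemma card_not_pairwiseFar_mul_le {n : ℕ} (R u : ℕ) :
    #{π : Perm (Fin n) | ¬PairwiseFar R π u} * (n - 1) ≤ u * (u - 1) * R * n.factorial := by
  set J := univ.filter fun j : Fin n => (j : ℕ) < u
  have hsub : (univ.filter fun π : Perm (Fin n) => ¬PairwiseFar R π u)
      ⊆ J.biUnion fun j => (Iio j).biUnion fun i =>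
          univ.filter fun π : Perm (Fin n) => |(π i : ℤ) - π j| ≤ R := by
    intro π hπ
    obtain ⟨j, hj, i, hij, hclose⟩ := not_pairwiseFar_iff.1 (mem_filter.1 hπ).2
    simp only [mem_biUnion, mem_Iio, mem_filter, mem_univ, true_and, J]
    exact ⟨j, hj, i, hij, hclose⟩
  have hJ : (∑ j ∈ J, (j : ℕ)) * 2 ≤ u * (u - 1) := by
    rw [← sum_range_id_mul_two,
      show ∑ j ∈ J, (j : ℕ) = ∑ k ∈ J.map Fin.valEmbedding, k by simp]
    refine Nat.mul_le_mul_right 2 (sum_le_sum_of_subset fun k hk => ?_)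
    obtain ⟨j, hj, rfl⟩ := mem_map.1 hk
    simpa [J] using hj
  calc #{π : Perm (Fin n) | ¬PairwiseFar R π u} * (n - 1)
      ≤ (∑ j ∈ J, ∑ i ∈ Iio j, #{π : Perm (Fin n) | |(π i : ℤ) - π j| ≤ R}) * (n - 1) :=
        Nat.mul_le_mul_right _ <| (card_le_card hsub).trans <|
          card_biUnion_le.trans <| sum_le_sum fun j _ => card_biUnion_le
    _ ≤ ∑ j ∈ J, ∑ i ∈ Iio j, 2 * R * n.factorial := by
        simp only [sum_mul]
        exact sum_le_sum fun j _ => sum_le_sum fun i hi =>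
          card_filter_abs_sub_apply_le R (mem_Iio.1 hi).ne
    _ = (∑ j ∈ J, (j : ℕ)) * 2 * (R * n.factorial) := by
        simp only [sum_const, Fin.card_Iio, smul_eq_mul, sum_mul]
        exact sum_congr rfl fun j _ => by ring
    _ ≤ u * (u - 1) * R * n.factorial := by
        rw [mul_assoc _ R]; exact Nat.mul_le_mul_right _ hJ

section sepLength

variable {n : ℕ} (R : ℕ)

lemma pairwiseFar_one (π : Perm (Fin n)) : PairwiseFar R π 1 :=
  fun i j hi hj hij => absurd (Fin.ext (by omega)) hij

lemma le_sepLength {π : Perm (Fin n)} {m : ℕ} (hm : m ≤ n) (h : PairwiseFar R π m) :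
    m ≤ sepLength R π :=
  le_csSup ⟨n, fun _ hk => hk.1⟩ ⟨hm, h⟩

lemma natCast_ceil_mul_ceil_sub_one_le {t : ℝ} (ht : 0 ≤ t) :
    ((⌈t⌉₊ * (⌈t⌉₊ - 1) : ℕ) : ℝ) ≤ t * (t + 1) := by
  rcases Nat.eq_zero_or_pos ⌈t⌉₊ with h | h
  · simp only [h, zero_mul, Nat.cast_zero]; positivity
  have hlt := Nat.ceil_lt_add_one ht
  have h1 : (1 : ℝ) ≤ ⌈t⌉₊ := by exact_mod_cast h
  push_cast [Nat.cast_sub h]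
  nlinarith

/-- Union bound over the `⌈t⌉(⌈t⌉-1)/2` pairs among the first `⌈t⌉` draws, each of which is
within distance `R` with probability at most `2R/(n-1)`. -/
lemma one_sub_le_card_filter_le_sepLength_div {t : ℝ} (ht : 0 ≤ t) (htn : t ≤ n)
    (hn : 2 ≤ n) :
    1 - t * (t + 1) * R / (n - 1) ≤
      #{π : Perm (Fin n) | t ≤ sepLength R π} / (n.factorial : ℝ) := by
  set u := ⌈t⌉₊
  have hgood : #{π : Perm (Fin n) | PairwiseFar R π u} ≤ #{π : Perm (Fin n) | t ≤ sepLength R π} :=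
    card_le_card <| monotone_filter_right _ fun π _ hπ =>
      (Nat.le_ceil t).trans (by exact_mod_cast le_sepLength R (Nat.ceil_le.2 htn) hπ)
  have hsplit := card_filter_add_card_filter_not (s := (univ : Finset (Perm (Fin n))))
    (fun π => PairwiseFar R π u)
  rw [card_univ, Fintype.card_perm, Fintype.card_fin] at hsplit
  have hbad : (#{π : Perm (Fin n) | ¬PairwiseFar R π u} : ℝ) * (n - 1)
      ≤ t * (t + 1) * R * n.factorial := by
    calc (#{π : Perm (Fin n) | ¬PairwiseFar R π u} : ℝ) * (n - 1)
        = ((#{π : Perm (Fin n) | ¬PairwiseFar R π u} * (n - 1) : ℕ) : ℝ) := by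
          push_cast [Nat.cast_sub (by omega : 1 ≤ n)]; ring
      _ ≤ ((u * (u - 1) * R * n.factorial : ℕ) : ℝ) := by
          exact_mod_cast card_not_pairwiseFar_mul_le R u
      _ = ((u * (u - 1) : ℕ) : ℝ) * R * n.factorial := by rw [Nat.cast_mul, Nat.cast_mul]
      _ ≤ t * (t + 1) * R * n.factorial := by
          gcongr; exact natCast_ceil_mul_ceil_sub_one_le ht
  have hn1 : (0 : ℝ) < n - 1 := by
    have : (2 : ℝ) ≤ n := by exact_mod_cast hn
    linarith
  have hfac : (0 : ℝ) < n.factorial := by exact_mod_cast n.factorial_pos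
  rw [le_div_iff₀ hfac, sub_mul, div_mul_eq_mul_div, one_mul]
  rw [← le_div_iff₀ hn1] at hbad
  have : (n.factorial : ℝ) ≤ #{π : Perm (Fin n) | t ≤ sepLength R π}
      + #{π : Perm (Fin n) | ¬PairwiseFar R π u} := by
    exact_mod_cast hsplit ▸ Nat.add_le_add_right hgood _
  linarith

end sepLength

lemma exp_neg_add_one_sq_div_two_le {x : ℝ} (hx : 0 ≤ x) : Real.exp (-(x + 1) ^ 2 / 2) ≤ 2 / 3 := by
  have hhalf : 3 / 2 ≤ Real.exp (1 / 2) := by linarith [Real.add_one_le_exp (1 / 2 : ℝ)]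
  calc Real.exp (-(x + 1) ^ 2 / 2) ≤ Real.exp (-(1 / 2)) := Real.exp_le_exp.2 (by nlinarith)
    _ = (Real.exp (1 / 2))⁻¹ := Real.exp_neg _
    _ ≤ 2 / 3 := by rw [inv_le_comm₀ (by positivity) (by norm_num)]; linarith

lemma inv_nine_mul_le_one_sub_div {L R s n : ℝ} (hL : 19 / 36 ≤ L) (hs : 1 ≤ s)
    (hn : 5 ≤ n) (hsn : 6 * L * R * s ^ 2 = n) :
    1 / (9 * L) ≤ 1 - s * (s + 1) * R / (n - 1) := by
  have hL0 : 0 < L := by linarith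
  have hpair : s * (s + 1) * R * (3 * L) ≤ n := by nlinarith
  rw [div_le_iff₀ (by positivity), sub_mul, div_mul_eq_mul_div, le_sub_iff_add_le,
    ← le_sub_iff_add_le', div_le_iff₀ (by linarith)]
  nlinarith

/-- for a uniformly random permutation `π` of `{1,…,n}`,
`P(M ≥ √((n/R)/(6 log 2))) ≥ (1/(6 log 2))·(exp(−(√(6 log(2) R/n)+1)²/2) − 2^{−n/(3R)})`. -/
theorem stmt_14 (n R : ℕ) (hn : 0 < n) (hR : 0 < R) :
    (1 / (6 * Real.log 2)) *
        (Real.exp (-(Real.sqrt (6 * Real.log 2 * R / n) + 1) ^ 2 / 2) -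
          (2 : ℝ) ^ (-(n : ℝ) / (3 * R))) ≤
      ((Finset.univ.filter (fun π : Equiv.Perm (Fin n) =>
          Real.sqrt (((n : ℝ) / R) / (6 * Real.log 2)) ≤ sepLength R π)).card : ℝ) /
        (n.factorial : ℝ) := by
  set L := Real.log 2
  set s := Real.sqrt (((n : ℝ) / R) / (6 * L))
  have hL : 0.6931471803 < L := Real.log_two_gt_d9
  have hR1 : (1 : ℝ) ≤ R := by exact_mod_cast hR
  have hlhs : 1 / (6 * L) * (Real.exp (-(Real.sqrt (6 * L * R / n) + 1) ^ 2 / 2) -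
      (2 : ℝ) ^ (-(n : ℝ) / (3 * R))) ≤ 1 / (9 * L) := by
    have := exp_neg_add_one_sq_div_two_le (Real.sqrt_nonneg (6 * L * R / n))
    have := Real.rpow_pos_of_pos two_pos (-(n : ℝ) / (3 * R))
    calc _ ≤ 1 / (6 * L) * (2 / 3) := by gcongr; linarith
      _ = 1 / (9 * L) := by field_simp; ring
  refine hlhs.trans ?_
  rcases le_or_gt s 1 with hs | hs
  · have hall (π : Perm (Fin n)) : s ≤ sepLength R π :=
      hs.trans (by exact_mod_cast le_sepLength R hn (pairwiseFar_one R π))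
    rw [filter_true_of_mem fun π _ => hall π, card_univ, Fintype.card_perm, Fintype.card_fin,
      div_self (by positivity), div_le_one (by positivity)]
    linarith
  have hsn : 6 * L * R * s ^ 2 = n := by
    rw [Real.sq_sqrt (by positivity)]; field_simp
  have hs2 : s ≤ s ^ 2 := by nlinarith
  have hLR : 4 < 6 * L * R := by nlinarith
  have hn5 : (5 : ℝ) ≤ n := by
    have : (4 : ℝ) < n := by nlinarith
    exact_mod_cast (show 4 < n by exact_mod_cast this)
  refine (inv_nine_mul_le_one_sub_div (by linarith) hs.le hn5 hsn).trans ?_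
  exact one_sub_le_card_filter_le_sepLength_div R (Real.sqrt_nonneg _) (by nlinarith)
    (by exact_mod_cast (show (2 : ℝ) ≤ n by linarith))
end

section
/- Let θ_1, …, θ_n ∈ ℝ^d and let r ∈ ℝ^d, r ≠ 0, be such that the inner products ⟨r, θ_1⟩, …, ⟨r, θ_n⟩ are pairwise distinct. Then there exists a reference point s ∈ ℝ^d such that for all i ≠ j, ‖θ_i − s‖ < ‖θ_j − s‖ if and only if ⟨r, θ_i⟩ > ⟨r, θ_j⟩. Hence every ranking of finitely many points induced by a linear functional x ↦ ⟨r, x⟩ is realizable as a distance-to-reference-point ranking. -/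
open RealInnerProductSpace Filter

/-!
Move the reference point far out along `r`, to `s = c • r`. Then
`‖x - s‖² - ‖y - s‖² = ‖x‖² - ‖y‖² - 2 c (⟪r, x⟫ - ⟪r, y⟫)`, so once `c` is large enough the
point with the larger inner product is strictly closer, simultaneously for the finitely many pairs.
-/

section

variable {E : Type*} [NormedAddCommGroup E] [InnerProductSpace ℝ E]

theorem norm_sub_smul_sq_sub_norm_sub_smul_sq (x y r : E) (c : ℝ) :
    ‖x - c • r‖ ^ 2 - ‖y - c • r‖ ^ 2 = ‖x‖ ^ 2 - ‖y‖ ^ 2 - 2 * c * (⟪r, x⟫ - ⟪r, y⟫) := by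
  simp only [norm_sub_sq_real, real_inner_smul_right, real_inner_comm r]
  ring

theorem eventually_dist_smul_lt_of_inner_lt (x y r : E) :
    ∀ᶠ c : ℝ in atTop, ⟪r, y⟫ < ⟪r, x⟫ → dist x (c • r) < dist y (c • r) := by
  by_cases hlt : ⟪r, y⟫ < ⟪r, x⟫
  · filter_upwards [eventually_gt_atTop ((‖x‖ ^ 2 - ‖y‖ ^ 2) / (2 * (⟪r, x⟫ - ⟪r, y⟫)))]
      with c hc _
    have hpos : 0 < 2 * (⟪r, x⟫ - ⟪r, y⟫) := by linarith
    rw [div_lt_iff₀ hpos] at hc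
    have hsq := norm_sub_smul_sq_sub_norm_sub_smul_sq x y r c
    rw [dist_eq_norm, dist_eq_norm]
    exact lt_of_pow_lt_pow_left₀ 2 (norm_nonneg _) (by linarith)
  · exact Eventually.of_forall fun _ h => absurd h hlt

theorem exists_dist_lt_iff_inner_lt {ι : Type*} [Finite ι] (θ : ι → E) (r : E)
    (hdistinct : ∀ i j, i ≠ j → ⟪r, θ i⟫ ≠ ⟪r, θ j⟫) :
    ∃ s : E, ∀ i j, i ≠ j → (dist (θ i) s < dist (θ j) s ↔ ⟪r, θ j⟫ < ⟪r, θ i⟫) := by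
  have hall : ∀ᶠ c : ℝ in atTop, ∀ i j,
      ⟪r, θ j⟫ < ⟪r, θ i⟫ → dist (θ i) (c • r) < dist (θ j) (c • r) :=
    eventually_all.2 fun i => eventually_all.2 fun j =>
      eventually_dist_smul_lt_of_inner_lt (θ i) (θ j) r
  obtain ⟨c, hc⟩ := hall.exists
  refine ⟨c • r, fun i j hij => ⟨fun hdist => ?_, hc i j⟩⟩
  rcases (hdistinct i j hij).lt_or_gt with hji | hij'
  · exact absurd (hc j i hji) (not_lt.2 hdist.le)
  · exact hij'

end

theorem stmt_18_general (d n : ℕ) (θ : Fin n → EuclideanSpace ℝ (Fin d))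
    (r : EuclideanSpace ℝ (Fin d))
    (hdistinct : ∀ i j : Fin n, i ≠ j → ⟪r, θ i⟫ ≠ ⟪r, θ j⟫) :
    ∃ s : EuclideanSpace ℝ (Fin d), ∀ i j : Fin n, i ≠ j →
      (dist (θ i) s < dist (θ j) s ↔ ⟪r, θ j⟫ < ⟪r, θ i⟫) :=
  exists_dist_lt_iff_inner_lt θ r hdistinct

/-- if `r ≠ 0` gives pairwise distinct inner products `⟪r, θ i⟫`, then some
reference point `s` ranks the points by distance exactly as the linear functional
`x ↦ ⟪r, x⟫` ranks them (larger inner product = closer to `s`). -/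
theorem stmt_18 (d n : ℕ) (θ : Fin n → EuclideanSpace ℝ (Fin d))
    (r : EuclideanSpace ℝ (Fin d)) (hr : r ≠ 0)
    (hdistinct : ∀ i j : Fin n, i ≠ j → ⟪r, θ i⟫ ≠ ⟪r, θ j⟫) :
    ∃ s : EuclideanSpace ℝ (Fin d), ∀ i j : Fin n, i ≠ j →
      (dist (θ i) s < dist (θ j) s ↔ ⟪r, θ j⟫ < ⟪r, θ i⟫) :=
  stmt_18_general d n θ r hdistinct
end
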